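/- arXiv:1502.01005 — 2 statements merged into one kernel-verified Lean document; each statement's English description precedes it below -/
import Mathlib

section
/- Let 𝒜 be a central hyperplane arrangement and ℜ ⊆ F(𝒜). Then I(ℜ) = √(J(ℜ)) : x_[n] = J(ℜ) : x_[n]. -/
/-!
`I(ℜ)` only depends on `U = K·ℜ`. Choose vectors `v₁, …, vₙ` whose space of linear relations is
exactly `U` (the images of the standard basis under an endomorphism of `Kⁿ` with kernel `U`); they
are nonzero since `U ⊆ F(𝒜)`. Then `I(ℜ)` is the Orlik–Terao ideal of the `vᵢ`, which is the kernel
of `xᵢ ↦ 1/ℓᵢ` into the fraction field of `K[y]`, `ℓᵢ` being the linear form with coefficients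
`vᵢ`. So `I(ℜ)` is prime and avoids `x_[n]`. Multiplying `ι(r)` by the variables outside
`supp r` gives `∑ᵢ rᵢ x_{[n]∖i}`, which is linear in `r`; hence `I(ℜ)·x_[n] ⊆ J(ℜ) ⊆ I(ℜ)`, and
both colon ideals are squeezed onto `I(ℜ)`.

The kernel is computed by induction on `n`. If `v₀` is parallel to some `vᵢ`, the element
`x₀ - c xᵢ` of the Orlik–Terao ideal eliminates `x₀`. Otherwise one inducts on the `x₀`-degree:
for a projection `ρ` with kernel `K v₀`, the leading `x₀`-coefficient of a kernel element lies in
the kernel for the vectors `ρ vᵢ` (clear denominators, then send `ℓ₀` to `0`), hence in their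
Orlik–Terao ideal, and relations among the `ρ vᵢ` lift to relations among the `vᵢ`.
-/

open MvPolynomial

noncomputable section

variable {K : Type*} [Field K] {n : ℕ}

open Classical in
/-- The support `supp(a) = {i : aᵢ ≠ 0}` of the linear form `∑ᵢ aᵢ xᵢ ∈ S₁`,
where linear forms of `S = K[x₁,…,xₙ]` are identified with their coefficient
vectors `a : Fin n → K`. -/
def lsupp (a : Fin n → K) : Finset (Fin n) :=
  Finset.univ.filter (fun i => a i ≠ 0)

/-- `ι(r) = ∑_{i ∈ supp r} aᵢ · x_{supp(r) ∖ {i}}` for the linear form `r = ∑ᵢ aᵢ xᵢ`. -/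
def iotaL (a : Fin n → K) : MvPolynomial (Fin n) K :=
  ∑ i ∈ lsupp a, C (a i) * ∏ j ∈ (lsupp a).erase i, X j

/-- `x_[n] = x₁⋯xₙ`. -/
def xAll (n : ℕ) (K : Type*) [Field K] : MvPolynomial (Fin n) K := ∏ i, X i

/-- `a : Fin n → K` (identified with the linear form `∑ᵢ aᵢ xᵢ ∈ S₁`) is a relation of the
central arrangement whose hyperplanes are the kernels of the linear forms `α i`, i.e. it lies
in the kernel of the map `S₁ → V*`, `xᵢ ↦ αᵢ`. -/
def IsRel {V : Type*} [AddCommGroup V] [Module K V]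
    (α : Fin n → Module.Dual K V) (a : Fin n → K) : Prop :=
  ∑ i, a i • α i = 0

/-- `J(ℜ) = (ι(r) : r ∈ ℜ)`. -/
def Jid (R : Set (Fin n → K)) : Ideal (MvPolynomial (Fin n) K) :=
  Ideal.span (iotaL '' R)

/-- `I(ℜ) = (ι(r) : r ∈ K·ℜ)`. -/
def Iid (R : Set (Fin n → K)) : Ideal (MvPolynomial (Fin n) K) :=
  Ideal.span (iotaL '' (Submodule.span K R : Set (Fin n → K)))

/-- The Orlik–Terao ideal `I(𝒜) = (ι(r) : r ∈ F(𝒜))`. -/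
def OTid {V : Type*} [AddCommGroup V] [Module K V]
    (α : Fin n → Module.Dual K V) : Ideal (MvPolynomial (Fin n) K) :=
  Ideal.span (iotaL '' {a | IsRel α a})

/-- The codimension (height) of an ideal `I`: the infimum of the heights, in the prime
spectrum, of the prime ideals containing `I`. -/
def codim {R : Type*} [CommRing R] (I : Ideal R) : ℕ∞ :=
  ⨅ p ∈ {p : PrimeSpectrum R | I ≤ p.asIdeal}, Order.height p

open Finset

lemma prod_erase_mul_prod_compl {ι M : Type*} [Fintype ι] [DecidableEq ι] [CommMonoid M]
    {s : Finset ι} {i : ι} (hi : i ∈ s) (f : ι → M) :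
    (∏ j ∈ s.erase i, f j) * ∏ j ∈ sᶜ, f j = ∏ j ∈ univ.erase i, f j := by
  rw [← prod_union (disjoint_left.mpr fun j hj => by simp [mem_of_mem_erase hj])]
  congr 1
  ext j
  by_cases hj : j ∈ s <;> by_cases hji : j = i <;> simp_all

lemma prod_erase_inv_mul_prod {ι F : Type*} [DecidableEq ι] [Field F] {L : ι → F} {s : Finset ι}
    (hL : ∀ j ∈ s, L j ≠ 0) {i : ι} (hi : i ∈ s) :
    (∏ j ∈ s.erase i, (L j)⁻¹) * ∏ j ∈ s, L j = L i := by
  rw [← mul_prod_erase s L hi, prod_inv_distrib, mul_left_comm,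
    inv_mul_cancel₀ (prod_ne_zero_iff.mpr fun j hj => hL j (mem_of_mem_erase hj)), mul_one]

lemma Ideal.eq_radical_colon_and_eq_colon_of_isPrime {S : Type*} [CommRing S] {J P : Ideal S}
    (hP : P.IsPrime) {x : S} (hJP : J ≤ P) (hx : x ∉ P) (hPJ : P ≤ J.colon (Ideal.span {x})) :
    P = J.radical.colon (Ideal.span {x}) ∧ P = J.colon (Ideal.span {x}) := by
  have hrad : J.radical.colon (Ideal.span {x}) ≤ P := fun f hf => by
    rw [Submodule.mem_colon_span_singleton, smul_eq_mul] at hf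
    exact (hP.mem_or_mem (hP.radical_le_iff.mpr hJP hf)).resolve_right hx
  have hle : J.colon (Ideal.span {x}) ≤ J.radical.colon (Ideal.span {x}) :=
    Submodule.colon_mono J.le_radical le_rfl
  exact ⟨le_antisymm (hPJ.trans hle) hrad, le_antisymm hPJ (hle.trans hrad)⟩

lemma exists_ker_eq {W : Type*} [AddCommGroup W] [Module K W] (U : Submodule K W) :
    ∃ ρ : W →ₗ[K] W, LinearMap.ker ρ = U := by
  obtain ⟨q, hq⟩ := U.exists_isCompl
  exact ⟨q.projection U hq.symm, Submodule.ker_projection _⟩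

lemma MvPolynomial.sub_mem_of_forall_X_sub_mem {σ R A : Type*} [CommSemiring R] [CommRing A]
    [Algebra R A] {φ ψ : MvPolynomial σ R →ₐ[R] A} {I : Ideal A} (h : ∀ i, φ (X i) - ψ (X i) ∈ I)
    (f : MvPolynomial σ R) : φ f - ψ f ∈ I := by
  have : (Ideal.Quotient.mkₐ R I).comp φ = (Ideal.Quotient.mkₐ R I).comp ψ :=
    algHom_ext fun i => Ideal.Quotient.eq.mpr (h i)
  exact Ideal.Quotient.eq.mp (DFunLike.congr_fun this f)

lemma finSuccEquiv_rename_succ {R : Type*} [CommSemiring R] (g : MvPolynomial (Fin n) R) :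
    finSuccEquiv R n (rename Fin.succ g) = Polynomial.C g := by
  have : (finSuccEquiv R n).toAlgHom.comp (rename Fin.succ) = Polynomial.CAlgHom :=
    algHom_ext fun i => by simp [finSuccEquiv_X_succ]
  exact DFunLike.congr_fun this g

lemma rename_succ_coeff_zero {R : Type*} [CommSemiring R] {f : MvPolynomial (Fin (n + 1)) R}
    (hf : degreeOf 0 f = 0) :
    rename Fin.succ ((finSuccEquiv R n f).coeff 0) = f :=
  (finSuccEquiv R n).injective <| by
    rw [finSuccEquiv_rename_succ,
      ← Polynomial.eq_C_of_natDegree_eq_zero (by rw [natDegree_finSuccEquiv, hf])]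

lemma degreeOf_zero_sub_X_zero_pow_mul_le {R : Type*} [CommRing R]
    {f : MvPolynomial (Fin (n + 1)) R} {D : ℕ} (hf : degreeOf 0 f ≤ D + 1)
    (w : MvPolynomial (Fin n) R) :
    degreeOf 0 (f - X 0 ^ D *
      (X 0 * rename Fin.succ ((finSuccEquiv R n f).coeff (D + 1)) - rename Fin.succ w)) ≤ D := by
  rw [← natDegree_finSuccEquiv] at hf ⊢
  set P := finSuccEquiv R n f
  have hP : finSuccEquiv R n (f - X 0 ^ D *
      (X 0 * rename Fin.succ (P.coeff (D + 1)) - rename Fin.succ w)) =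
      P - Polynomial.C (P.coeff (D + 1)) * Polynomial.X ^ (D + 1) +
        Polynomial.C w * Polynomial.X ^ D := by
    simp only [map_sub, map_mul, map_pow, finSuccEquiv_X_zero, finSuccEquiv_rename_succ, P]
    ring
  rw [hP, Polynomial.natDegree_le_iff_coeff_eq_zero]
  intro k hk
  simp only [Polynomial.coeff_add, Polynomial.coeff_sub, Polynomial.coeff_C_mul_X_pow]
  rcases (Nat.succ_le_of_lt hk).eq_or_lt with rfl | hk'
  · simp
  · rw [Polynomial.coeff_eq_zero_of_natDegree_lt (hf.trans_lt hk'), if_neg hk'.ne', if_neg hk.ne']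
    simp

lemma linearCombination_eq_sum_lsupp {W : Type*} [AddCommGroup W] [Module K W] (v : Fin n → W)
    (a : Fin n → K) : Fintype.linearCombination K v a = ∑ i ∈ lsupp a, a i • v i :=
  (sum_subset (subset_univ (lsupp a)) fun i _ hi => by
    simp [show a i = 0 by simpa [lsupp] using hi]).symm

lemma linearCombination_cons {W : Type*} [AddCommGroup W] [Module K W] {m : ℕ}
    (v : Fin (m + 1) → W) (t : K) (b : Fin m → K) :
    Fintype.linearCombination K v (Fin.cons t b) =
      t • v 0 + Fintype.linearCombination K (Fin.tail v) b := by
  simp [Fintype.linearCombination_apply, Fin.sum_univ_succ, Fin.tail]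

section ReflectEval

variable {R σ A B : Type*} [CommSemiring R] [Fintype σ] [CommSemiring A] [Algebra R A]
  [CommSemiring B] [Algebra R B]

/-- `f(1/L)` with its denominators cleared by `∏ i, L i ^ M i` (see `reflectEval_eq_aeval_inv_mul`).
Unlike `f(1/L)` it makes sense, and commutes with algebra maps, when some `L i` vanish. -/
def reflectEval (M : σ → ℕ) (L : σ → A) (f : MvPolynomial σ R) : A :=
  ∑ m ∈ f.support, algebraMap R A (coeff m f) * ∏ i, L i ^ (M i - m i)

lemma map_reflectEval (h : A →ₐ[R] B) (M : σ → ℕ) (L : σ → A) (f : MvPolynomial σ R) :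
    h (reflectEval M L f) = reflectEval M (fun i => h (L i)) f := by
  simp [reflectEval, map_sum, map_prod]

lemma reflectEval_eq_aeval_inv_mul {F : Type*} [Field F] [Algebra R F] {L : σ → F}
    (hL : ∀ i, L i ≠ 0) {M : σ → ℕ} {f : MvPolynomial σ R}
    (hM : ∀ m ∈ f.support, ∀ i, m i ≤ M i) :
    reflectEval M L f = aeval (fun i => (L i)⁻¹) f * ∏ i, L i ^ M i := by
  rw [reflectEval, aeval_def, eval₂_eq', sum_mul]
  refine sum_congr rfl fun m hm => ?_
  rw [mul_assoc, ← prod_mul_distrib]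
  congr 1
  refine prod_congr rfl fun i _ => ?_
  rw [inv_pow, inv_mul_eq_div, pow_sub₀ _ (hL i) (hM m hm i), div_eq_mul_inv]

lemma reflectEval_finSuccEquiv (L : Fin (n + 1) → A) (M : Fin (n + 1) → ℕ)
    {f : MvPolynomial (Fin (n + 1)) R} (hM : degreeOf 0 f ≤ M 0) :
    reflectEval M L f = ∑ k ∈ range (M 0 + 1),
      L 0 ^ (M 0 - k) * reflectEval (Fin.tail M) (Fin.tail L) ((finSuccEquiv R n f).coeff k) := by
  classical
  rw [reflectEval, ← sum_fiberwise_of_maps_to (g := fun m => m 0) fun m hm =>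
    mem_range_succ_iff.mpr ((monomial_le_degreeOf 0 hm).trans hM)]
  refine sum_congr rfl fun k _ => ?_
  rw [reflectEval, mul_sum]
  refine sum_nbij' Finsupp.tail (Finsupp.cons k) ?_ ?_ ?_ ?_ ?_
  · intro m hm
    rw [mem_filter] at hm
    rw [mem_support_iff, finSuccEquiv_coeff_coeff, ← hm.2, Finsupp.cons_tail]
    exact mem_support_iff.mp hm.1
  · intro m hm
    rw [mem_support_iff, finSuccEquiv_coeff_coeff] at hm
    exact mem_filter.mpr ⟨mem_support_iff.mpr hm, Finsupp.cons_zero _ _⟩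
  · intro m hm
    rw [mem_filter] at hm
    rw [← hm.2, Finsupp.cons_tail]
  · exact fun m _ => Finsupp.tail_cons k m
  · intro m hm
    rw [mem_filter] at hm
    rw [finSuccEquiv_coeff_coeff, ← hm.2, Finsupp.cons_tail, Fin.prod_univ_succ]
    simp only [Fin.tail, Finsupp.tail_apply]
    ring

end ReflectEval

section Iota

def iotaUniv : (Fin n → K) →ₗ[K] MvPolynomial (Fin n) K :=
  Fintype.linearCombination K fun i : Fin n => ∏ j ∈ univ.erase i, X j

lemma iotaL_mul_prod_compl (a : Fin n → K) :
    iotaL a * ∏ j ∈ (lsupp a)ᶜ, X j = iotaUniv a := by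
  rw [iotaUniv, linearCombination_eq_sum_lsupp, iotaL, sum_mul]
  refine sum_congr rfl fun i hi => ?_
  rw [mul_assoc, prod_erase_mul_prod_compl hi, smul_eq_C_mul]

lemma iotaL_mul_xAll (a : Fin n → K) :
    iotaL a * xAll n K = (∏ i ∈ lsupp a, X i) * iotaUniv a := by
  rw [← iotaL_mul_prod_compl, xAll, ← prod_mul_prod_compl (lsupp a)]
  ring

lemma iotaUniv_mem_Jid {R : Set (Fin n → K)} {a : Fin n → K} (ha : a ∈ Submodule.span K R) :
    iotaUniv a ∈ Jid R := by
  suffices Submodule.span K R ≤ ((Jid R).restrictScalars K).comap iotaUniv from this ha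
  refine Submodule.span_le.mpr fun r hr => ?_
  rw [SetLike.mem_coe, Submodule.mem_comap, Submodule.restrictScalars_mem, ← iotaL_mul_prod_compl]
  exact Ideal.mul_mem_right _ _ (Ideal.subset_span ⟨r, hr, rfl⟩)

lemma Iid_le_colon (R : Set (Fin n → K)) : Iid R ≤ (Jid R).colon (Ideal.span {xAll n K}) := by
  rw [Iid, Ideal.span_le]
  rintro _ ⟨a, ha, rfl⟩
  rw [SetLike.mem_coe, Submodule.mem_colon_span_singleton, smul_eq_mul, iotaL_mul_xAll]
  exact Ideal.mul_mem_left _ _ (iotaUniv_mem_Jid ha)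

lemma Jid_le_Iid (R : Set (Fin n → K)) : Jid R ≤ Iid R :=
  Ideal.span_mono (Set.image_mono Submodule.subset_span)

lemma lsupp_single (i : Fin n) : lsupp (Pi.single i (1 : K)) = {i} := by
  ext j
  by_cases hj : j = i <;> simp [lsupp, Pi.single_apply, hj]

lemma iotaL_single (i : Fin n) : iotaL (Pi.single i (1 : K)) = 1 := by
  simp [iotaL, lsupp_single]

variable {m : ℕ} (b : Fin m → K)

lemma lsupp_cons_zero : lsupp (Fin.cons (0 : K) b) = (lsupp b).map (Fin.succEmb m) := by
  ext j
  refine Fin.cases ?_ (fun i => ?_) j <;> simp [lsupp, Fin.succ_ne_zero]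

lemma lsupp_cons_of_ne_zero {t : K} (ht : t ≠ 0) :
    lsupp (Fin.cons t b) = insert 0 ((lsupp b).map (Fin.succEmb m)) := by
  ext j
  refine Fin.cases ?_ (fun i => ?_) j <;> simp [lsupp, Fin.succ_ne_zero, ht]

lemma rename_succ_prod_X (s : Finset (Fin m)) :
    rename Fin.succ (∏ j ∈ s, X j : MvPolynomial (Fin m) K) = ∏ j ∈ s.map (Fin.succEmb m), X j := by
  simp [map_prod, prod_map]

lemma iotaL_cons_zero : iotaL (Fin.cons 0 b) = rename Fin.succ (iotaL b) := by
  rw [iotaL, iotaL, lsupp_cons_zero, sum_map, map_sum]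
  refine sum_congr rfl fun i _ => ?_
  rw [map_mul, rename_C, ← map_erase, rename_succ_prod_X]
  rfl

lemma iotaL_cons_of_ne_zero {t : K} (ht : t ≠ 0) :
    iotaL (Fin.cons t b) =
      C t * rename Fin.succ (∏ i ∈ lsupp b, X i) + X 0 * rename Fin.succ (iotaL b) := by
  have h0 : (0 : Fin (m + 1)) ∉ (lsupp b).map (Fin.succEmb m) := by simp [Fin.succ_ne_zero]
  rw [iotaL, lsupp_cons_of_ne_zero b ht, sum_insert h0, erase_insert h0, rename_succ_prod_X,
    iotaL, map_sum, mul_sum, sum_map]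
  congr 1
  refine sum_congr rfl fun i _ => ?_
  rw [Fin.coe_succEmb, erase_insert_of_ne (Fin.succ_ne_zero i).symm,
    prod_insert (by simp [Fin.succ_ne_zero]), map_mul, rename_C, rename_succ_prod_X, map_erase,
    Fin.coe_succEmb, Fin.cons_succ]
  ring

end Iota

section OrlikTerao

variable {W : Type*} [AddCommGroup W] [Module K W]

def orlikTeraoIdeal (v : Fin n → W) :
    Ideal (MvPolynomial (Fin n) K) :=
  Ideal.span (iotaL '' (LinearMap.ker (Fintype.linearCombination K v) : Set (Fin n → K)))

lemma rename_succ_mem_orlikTeraoIdeal {v : Fin (n + 1) → W} {g : MvPolynomial (Fin n) K}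
    (hg : g ∈ orlikTeraoIdeal (Fin.tail v)) : rename Fin.succ g ∈ orlikTeraoIdeal v := by
  suffices (orlikTeraoIdeal (Fin.tail v)).map (rename Fin.succ) ≤ orlikTeraoIdeal v from
    this (Ideal.mem_map_of_mem _ hg)
  rw [orlikTeraoIdeal, Ideal.map_span, Ideal.span_le]
  rintro _ ⟨_, ⟨b, hb, rfl⟩, rfl⟩
  refine Ideal.subset_span ⟨Fin.cons 0 b, ?_, iotaL_cons_zero b⟩
  simpa [linearCombination_cons] using hb

lemma X_zero_sub_smul_X_succ_mem {v : Fin (n + 1) → W} {i : Fin n} {c : K} (hc0 : c ≠ 0)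
    (hc : v i.succ = c • v 0) : (X 0 - c • X i.succ : MvPolynomial _ K) ∈ orlikTeraoIdeal v := by
  refine Ideal.subset_span ⟨Fin.cons (-c) (Pi.single i 1), ?_, ?_⟩
  · simp [linearCombination_cons, Fin.tail, hc]
  · rw [iotaL_cons_of_ne_zero _ (neg_ne_zero.mpr hc0), lsupp_single, iotaL_single,
      prod_singleton, rename_X, map_one, mul_one, smul_eq_C_mul, map_neg]
    ring

-- `∑ bᵢ ρ vᵢ₊₁ = 0` forces `∑ bᵢ vᵢ₊₁ = c v₀`, so `(-c, b)` is a relation among the `vᵢ`.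
lemma exists_X_zero_mul_rename_iotaL_sub_rename_mem {v : Fin (n + 1) → W} {ρ : W →ₗ[K] W}
    (hρ : LinearMap.ker ρ ≤ K ∙ v 0) {b : Fin n → K}
    (hb : b ∈ LinearMap.ker (Fintype.linearCombination K fun i => ρ (v i.succ))) :
    ∃ w, X 0 * rename Fin.succ (iotaL b) - rename Fin.succ w ∈ orlikTeraoIdeal v := by
  have hb' : Fintype.linearCombination K (Fin.tail v) b ∈ LinearMap.ker ρ := by
    simpa [Fintype.linearCombination_apply, map_sum, Fin.tail] using hb
  obtain ⟨c, hc⟩ := Submodule.mem_span_singleton.mp (hρ hb')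
  have hrel : Fin.cons (-c) b ∈ LinearMap.ker (Fintype.linearCombination K v) := by
    rw [LinearMap.mem_ker, linearCombination_cons, ← hc, neg_smul, neg_add_cancel]
  have hmem : iotaL (Fin.cons (-c) b) ∈ orlikTeraoIdeal v := Ideal.subset_span ⟨_, hrel, rfl⟩
  by_cases hc0 : c = 0
  · refine ⟨0, ?_⟩
    rw [hc0, neg_zero, iotaL_cons_zero] at hmem
    rw [map_zero, sub_zero]
    exact Ideal.mul_mem_left _ _ hmem
  · refine ⟨C c * ∏ i ∈ lsupp b, X i, ?_⟩
    convert hmem using 1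
    rw [iotaL_cons_of_ne_zero b (neg_ne_zero.mpr hc0), map_mul, rename_C, map_neg]
    ring

lemma exists_X_zero_mul_rename_sub_rename_mem {v : Fin (n + 1) → W} {ρ : W →ₗ[K] W}
    (hρ : LinearMap.ker ρ ≤ K ∙ v 0) {g : MvPolynomial (Fin n) K}
    (hg : g ∈ orlikTeraoIdeal fun i => ρ (v i.succ)) :
    ∃ w, X 0 * rename Fin.succ g - rename Fin.succ w ∈ orlikTeraoIdeal v := by
  induction hg using Submodule.span_induction with
  | mem _ hx =>
    obtain ⟨b, hb, rfl⟩ := hx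
    exact exists_X_zero_mul_rename_iotaL_sub_rename_mem hρ hb
  | zero => exact ⟨0, by simp⟩
  | add x y _ _ hx hy =>
    obtain ⟨w₁, hw₁⟩ := hx
    obtain ⟨w₂, hw₂⟩ := hy
    refine ⟨w₁ + w₂, ?_⟩
    convert add_mem hw₁ hw₂ using 1
    simp only [map_add]
    ring
  | smul a x _ hx =>
    obtain ⟨w, hw⟩ := hx
    refine ⟨a * w, ?_⟩
    convert Ideal.mul_mem_left _ (rename Fin.succ a) hw using 1
    simp only [smul_eq_mul, map_mul]
    ring

lemma exists_ker_linearCombination_eq (U : Submodule K (Fin n → K)) :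
    ∃ v : Fin n → Fin n → K, LinearMap.ker (Fintype.linearCombination K v) = U := by
  obtain ⟨ρ, hρ⟩ := exists_ker_eq U
  refine ⟨fun i => ρ (Pi.single i 1), ?_⟩
  rwa [show Fintype.linearCombination K (fun i => ρ (Pi.single i 1)) = ρ from
    (Pi.basisFun K (Fin n)).ext fun i => by simp]

end OrlikTerao

section Reciprocal

variable {d : ℕ}

variable (K) in
abbrev linearForm (d : ℕ) : (Fin d → K) →ₗ[K] MvPolynomial (Fin d) K :=
  Fintype.linearCombination K X

variable (K) in
abbrev toFrac (d : ℕ) : MvPolynomial (Fin d) K →ₐ[K] FractionRing (MvPolynomial (Fin d) K) :=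
  IsScalarTower.toAlgHom K _ _

def reciprocalHom (v : Fin n → Fin d → K) :
    MvPolynomial (Fin n) K →ₐ[K] FractionRing (MvPolynomial (Fin d) K) :=
  aeval fun i => (toFrac K d (linearForm K d (v i)))⁻¹

lemma toFrac_linearForm_ne_zero {w : Fin d → K} (hw : w ≠ 0) :
    toFrac K d (linearForm K d w) ≠ 0 := by
  rw [ne_eq, map_eq_zero_iff (toFrac K d) (IsFractionRing.injective _ _)]
  exact fun h => hw (funext (Fintype.linearIndependent_iff.mp (linearIndependent_X (Fin d) K) w h))

lemma reciprocalHom_X (v : Fin n → Fin d → K) (i : Fin n) :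
    reciprocalHom v (X i) = (toFrac K d (linearForm K d (v i)))⁻¹ :=
  aeval_X _ _

lemma reciprocalHom_rename_succ (v : Fin (n + 1) → Fin d → K) (g : MvPolynomial (Fin n) K) :
    reciprocalHom v (rename Fin.succ g) = reciprocalHom (Fin.tail v) g := by
  rw [reciprocalHom, aeval_rename]
  rfl

lemma xAll_notMem_ker_reciprocalHom {v : Fin n → Fin d → K} (hv : ∀ i, v i ≠ 0) :
    xAll n K ∉ RingHom.ker (reciprocalHom v) := by
  rw [RingHom.mem_ker, xAll, map_prod]
  exact prod_ne_zero_iff.mpr fun i _ => by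
    rw [reciprocalHom_X]
    exact inv_ne_zero (toFrac_linearForm_ne_zero (hv i))

lemma reciprocalHom_eq_zero_iff {v : Fin n → Fin d → K} (hv : ∀ i, v i ≠ 0) {M : Fin n → ℕ}
    {f : MvPolynomial (Fin n) K} (hM : ∀ m ∈ f.support, ∀ i, m i ≤ M i) :
    reciprocalHom v f = 0 ↔ reflectEval M (fun i => linearForm K d (v i)) f = 0 := by
  have hL : ∀ i, toFrac K d (linearForm K d (v i)) ≠ 0 :=
    fun i => toFrac_linearForm_ne_zero (hv i)
  conv_rhs => rw [← map_eq_zero_iff (toFrac K d) (IsFractionRing.injective _ _), map_reflectEval,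
    reflectEval_eq_aeval_inv_mul hL hM, mul_eq_zero,
    or_iff_left (prod_ne_zero_iff.mpr fun i _ => pow_ne_zero _ (hL i))]
  rfl

lemma orlikTeraoIdeal_le_ker {v : Fin n → Fin d → K} (hv : ∀ i, v i ≠ 0) :
    orlikTeraoIdeal v ≤ RingHom.ker (reciprocalHom v) := by
  rw [orlikTeraoIdeal, Ideal.span_le]
  rintro _ ⟨a, ha, rfl⟩
  set L := fun i => toFrac K d (linearForm K d (v i))
  have hL : ∀ j ∈ lsupp a, L j ≠ 0 := fun j _ => toFrac_linearForm_ne_zero (hv j)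
  have key : reciprocalHom v (iotaL a) * ∏ j ∈ lsupp a, L j =
      toFrac K d (linearForm K d (Fintype.linearCombination K v a)) := by
    rw [iotaL, map_sum, sum_mul, linearCombination_eq_sum_lsupp v a, map_sum, map_sum]
    refine sum_congr rfl fun i hi => ?_
    rw [map_mul, map_prod, mul_assoc, algHom_C, map_smul, map_smul, Algebra.smul_def]
    simp only [reciprocalHom_X]
    rw [prod_erase_inv_mul_prod hL hi]
  rw [SetLike.mem_coe, LinearMap.mem_ker] at ha
  rw [ha, map_zero, map_zero] at key
  exact (mul_eq_zero.mp key).resolve_right (prod_ne_zero_iff.mpr hL)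

lemma exists_algHom_linearForm (ρ : (Fin d → K) →ₗ[K] Fin d → K) :
    ∃ φ : MvPolynomial (Fin d) K →ₐ[K] MvPolynomial (Fin d) K,
      ∀ w, φ (linearForm K d w) = linearForm K d (ρ w) := by
  refine ⟨aeval fun j => linearForm K d (ρ (Pi.single j 1)), fun w => ?_⟩
  have : (aeval fun j => linearForm K d (ρ (Pi.single j 1))).toLinearMap ∘ₗ linearForm K d =
      linearForm K d ∘ₗ ρ :=
    (Pi.basisFun K (Fin d)).ext fun j => by simp
  exact LinearMap.congr_fun this w

-- Sending `ℓ(v 0)` to `0` kills every term of the `x₀`-expansion but the top one.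
lemma reciprocalHom_coeff_finSuccEquiv_eq_zero {v : Fin (n + 1) → Fin d → K} (hv : ∀ i, v i ≠ 0)
    {ρ : (Fin d → K) →ₗ[K] Fin d → K} (hρ0 : ρ (v 0) = 0) (hρv : ∀ i : Fin n, ρ (v i.succ) ≠ 0)
    {f : MvPolynomial (Fin (n + 1)) K} {D : ℕ} (hdeg : degreeOf 0 f ≤ D)
    (hf : reciprocalHom v f = 0) :
    reciprocalHom (fun i => ρ (v i.succ)) ((finSuccEquiv K n f).coeff D) = 0 := by
  obtain ⟨φ, hφ⟩ := exists_algHom_linearForm ρ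
  set M : Fin (n + 1) → ℕ := Fin.cons D fun i => degreeOf i.succ f
  have hM : ∀ m ∈ f.support, ∀ i, m i ≤ M i := fun m hm i =>
    Fin.cases ((monomial_le_degreeOf 0 hm).trans hdeg) (fun i => monomial_le_degreeOf i.succ hm) i
  have h := congrArg φ ((reciprocalHom_eq_zero_iff hv hM).mp hf)
  simp only [map_reflectEval, hφ, map_zero] at h
  rw [reflectEval_finSuccEquiv _ _ hdeg, show M 0 = D from rfl, hρ0, map_zero,
    sum_eq_single_of_mem D (self_mem_range_succ D), Nat.sub_self, pow_zero, one_mul] at h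
  · refine (reciprocalHom_eq_zero_iff (fun i => hρv i) fun m hm i => ?_).mpr h
    exact (monomial_le_degreeOf i hm).trans (degreeOf_coeff_finSuccEquiv f i D)
  · intro k hk hkD
    rw [zero_pow (Nat.sub_ne_zero_of_lt ((mem_range_succ_iff.mp hk).lt_of_ne hkD)), zero_mul]

lemma ker_reciprocalHom_le_of_eq_smul {v : Fin (n + 1) → Fin d → K} (hv : ∀ i, v i ≠ 0)
    {i : Fin n} {c : K} (hc : v i.succ = c • v 0)
    (ih : RingHom.ker (reciprocalHom (Fin.tail v)) ≤ orlikTeraoIdeal (Fin.tail v)) :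
    RingHom.ker (reciprocalHom v) ≤ orlikTeraoIdeal v := by
  have hc0 : c ≠ 0 := by
    rintro rfl
    exact hv i.succ (by rw [hc, zero_smul])
  set σ : MvPolynomial (Fin (n + 1)) K →ₐ[K] MvPolynomial (Fin n) K :=
    aeval (Fin.cons (c • X i) X)
  have hσ : reciprocalHom v = (reciprocalHom (Fin.tail v)).comp σ := by
    refine algHom_ext fun j => Fin.cases ?_ (fun j => ?_) j
    · simp only [AlgHom.comp_apply, σ, aeval_X, Fin.cons_zero, map_smul, reciprocalHom_X,
        Fin.tail, hc, smul_inv₀, smul_smul, mul_inv_cancel₀ hc0, one_smul]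
    · simp [σ, reciprocalHom_X, Fin.tail]
  intro f hf
  have hsub : f - rename Fin.succ (σ f) ∈ orlikTeraoIdeal v := by
    refine Ideal.span_le.mpr (Set.singleton_subset_iff.mpr (X_zero_sub_smul_X_succ_mem hc0 hc))
      (sub_mem_of_forall_X_sub_mem (φ := AlgHom.id K _) (ψ := (rename Fin.succ).comp σ)
        (fun j => Fin.cases (by simp [σ]) (fun j => by simp [σ]) j) f)
  have hσf : σ f ∈ RingHom.ker (reciprocalHom (Fin.tail v)) := by
    rwa [RingHom.mem_ker, ← AlgHom.comp_apply, ← hσ]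
  simpa using add_mem hsub (rename_succ_mem_orlikTeraoIdeal (ih hσf))

lemma ker_reciprocalHom_le_of_ker_eq {v : Fin (n + 1) → Fin d → K} (hv : ∀ i, v i ≠ 0)
    {ρ : (Fin d → K) →ₗ[K] Fin d → K} (hρ : LinearMap.ker ρ = K ∙ v 0)
    (hρv : ∀ i : Fin n, ρ (v i.succ) ≠ 0)
    (ih : ∀ w : Fin n → Fin d → K, (∀ i, w i ≠ 0) →
      RingHom.ker (reciprocalHom w) ≤ orlikTeraoIdeal w) :
    RingHom.ker (reciprocalHom v) ≤ orlikTeraoIdeal v := by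
  have hρ0 : ρ (v 0) = 0 := by
    rw [← LinearMap.mem_ker, hρ]
    exact Submodule.mem_span_singleton_self _
  suffices ∀ D f, degreeOf 0 f ≤ D → reciprocalHom v f = 0 → f ∈ orlikTeraoIdeal v from
    fun f hf => this _ f le_rfl hf
  intro D
  induction D with
  | zero =>
    intro f hdeg hf
    rw [← rename_succ_coeff_zero (Nat.le_zero.mp hdeg)] at hf ⊢
    rw [reciprocalHom_rename_succ] at hf
    exact rename_succ_mem_orlikTeraoIdeal (ih _ (fun i => hv i.succ) hf)
  | succ D ihD =>
    intro f hdeg hf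
    obtain ⟨w, hw⟩ := exists_X_zero_mul_rename_sub_rename_mem hρ.le
      (ih _ hρv (reciprocalHom_coeff_finSuccEquiv_eq_zero hv hρ0 hρv hdeg hf))
    have he := Ideal.mul_mem_left _ (X 0 ^ D) hw
    have hrest := ihD _ (degreeOf_zero_sub_X_zero_pow_mul_le hdeg w) <| by
      rw [map_sub, hf, RingHom.mem_ker.mp (orlikTeraoIdeal_le_ker hv he), sub_zero]
    simpa using add_mem hrest he

theorem ker_reciprocalHom_le : ∀ {n : ℕ} (v : Fin n → Fin d → K), (∀ i, v i ≠ 0) →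
    RingHom.ker (reciprocalHom v) ≤ orlikTeraoIdeal v
  | 0, v, _ => fun f hf => by
    rw [RingHom.mem_ker, eq_C_of_isEmpty f, reciprocalHom, aeval_C,
      map_eq_zero_iff _ (algebraMap K _).injective] at hf
    rw [eq_C_of_isEmpty f, hf, map_zero]
    exact zero_mem _
  | n + 1, v, hv => by
    obtain ⟨ρ, hρ⟩ := exists_ker_eq (K ∙ v 0)
    by_cases hpar : ∃ i : Fin n, ρ (v i.succ) = 0
    · obtain ⟨i, hi⟩ := hpar
      obtain ⟨c, hc⟩ := Submodule.mem_span_singleton.mp (hρ ▸ LinearMap.mem_ker.mpr hi)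
      exact ker_reciprocalHom_le_of_eq_smul hv hc.symm (ker_reciprocalHom_le _ fun i => hv i.succ)
    · rw [not_exists] at hpar
      exact ker_reciprocalHom_le_of_ker_eq hv hρ hpar fun w hw => ker_reciprocalHom_le w hw

theorem ker_reciprocalHom {v : Fin n → Fin d → K} (hv : ∀ i, v i ≠ 0) :
    RingHom.ker (reciprocalHom v) = orlikTeraoIdeal v :=
  le_antisymm (ker_reciprocalHom_le v hv) (orlikTeraoIdeal_le_ker hv)

end Reciprocal

theorem Iid_eq_radical_colon_eq_colon_general
    {V : Type*} [AddCommGroup V] [Module K V]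
    (α : Fin n → Module.Dual K V) (hne : ∀ i, α i ≠ 0)
    (R : Set (Fin n → K)) (hR : ∀ r ∈ R, IsRel α r) :
    Iid R = ((Jid R).radical).colon (Ideal.span {xAll n K}) ∧
    Iid R = (Jid R).colon (Ideal.span {xAll n K}) := by
  obtain ⟨v, hv⟩ := exists_ker_linearCombination_eq (Submodule.span K R)
  have hRα : Submodule.span K R ≤ LinearMap.ker (Fintype.linearCombination K α) :=
    Submodule.span_le.mpr hR
  have hv0 : ∀ i, v i ≠ 0 := fun i hi => hne i <| by
    simpa using hRα (hv ▸ LinearMap.mem_ker.mpr (by simpa using hi) : Pi.single i 1 ∈ _)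
  have hI : Iid R = RingHom.ker (reciprocalHom v) := by
    rw [ker_reciprocalHom hv0, orlikTeraoIdeal, hv, Iid]
  rw [hI]
  exact Ideal.eq_radical_colon_and_eq_colon_of_isPrime (RingHom.ker_isPrime _)
    (hI ▸ Jid_le_Iid R) (xAll_notMem_ker_reciprocalHom hv0) (hI ▸ Iid_le_colon R)

/-- Corollary 3.3, first part: for a central arrangement `𝒜` and `ℜ ⊆ F(𝒜)`,
`I(ℜ) = √(J(ℜ)) : x_[n] = J(ℜ) : x_[n]`. -/
theorem Iid_eq_radical_colon_eq_colon
    {V : Type*} [AddCommGroup V] [Module K V] [FiniteDimensional K V]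
    (α : Fin n → Module.Dual K V) (hne : ∀ i, α i ≠ 0)
    (hdist : ∀ i j, i ≠ j → LinearMap.ker (α i) ≠ LinearMap.ker (α j))
    (R : Set (Fin n → K)) (hR : ∀ r ∈ R, IsRel α r) :
    Iid R = ((Jid R).radical).colon (Ideal.span {xAll n K}) ∧
    Iid R = (Jid R).colon (Ideal.span {xAll n K}) :=
  Iid_eq_radical_colon_eq_colon_general α hne R hR

end
end

section
/- Let ℜ ⊆ F(𝒜) and let r ∈ F(𝒜) be induced from ℜ, i.e., there exist r_1, …, r_m ∈ ℜ and a_1, …, a_m ∈ K such that r = Σ_{i=1}^m a_i r_i and |supp(r_i) ∩ (∪_{j=1}^{i-1} supp(r_j))| ≤ 1 for i = 2, …, m. Then ι(r) ∈ J(ℜ). -/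
open MvPolynomial

noncomputable section

variable {K : Type*} [Field K] {n : ℕ}

/-!
Induct along the sequence `r₁, r₂, …`: the support of a partial sum `s` and that of the next
summand `t` meet in at most one index `k`. If nothing cancels, `supp (s + t) = supp s ∪ supp t`
and `ι(s + t) = x_{supp t ∖ supp s} ι(s) + x_{supp s ∖ supp t} ι(t)`. If `sₖ + tₖ = 0`, write
`A = supp s ∖ {k}`, `B = supp t ∖ {k}` and `ι_A = iotaOn A`; then
`ι(s + t) = x_B ι_A(s) + x_A ι_B(t)`, `ι(s) = sₖ x_A + xₖ ι_A(s)` and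
`ι(t) = -sₖ x_B + xₖ ι_B(t)`, whence `sₖ ι(s + t) = ι_B(t) ι(s) - ι_A(s) ι(t)`.
-/

open Finset

lemma mem_lsupp {a : Fin n → K} {i : Fin n} : i ∈ lsupp a ↔ a i ≠ 0 := by
  simp [lsupp]

lemma notMem_lsupp {a : Fin n → K} {i : Fin n} : i ∉ lsupp a ↔ a i = 0 := by
  simp [mem_lsupp]

lemma lsupp_smul_subset (c : K) (u : Fin n → K) : lsupp (c • u) ⊆ lsupp u := fun i hi => by
  rw [mem_lsupp] at hi ⊢
  exact right_ne_zero_of_mul hi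

lemma lsupp_smul {c : K} (hc : c ≠ 0) (u : Fin n → K) : lsupp (c • u) = lsupp u := by
  ext i
  simp [mem_lsupp, hc]

lemma lsupp_sum_subset {ι : Type*} (s : Finset ι) (f : ι → Fin n → K) :
    lsupp (∑ i ∈ s, f i) ⊆ s.biUnion fun i => lsupp (f i) := by
  intro j hj
  contrapose! hj
  simp only [mem_biUnion, not_exists, not_and, notMem_lsupp] at hj ⊢
  rw [Finset.sum_apply, sum_eq_zero hj]

/-- `∑_{i ∈ U} uᵢ x_{U ∖ {i}}`; unlike `iotaL u = iotaOn (lsupp u) u`, it is linear in `u`. -/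
def iotaOn (U : Finset (Fin n)) (u : Fin n → K) : MvPolynomial (Fin n) K :=
  ∑ i ∈ U, C (u i) * ∏ j ∈ U.erase i, X j

lemma iotaL_eq_iotaOn (u : Fin n → K) : iotaL u = iotaOn (lsupp u) u := rfl

lemma iotaOn_add (U : Finset (Fin n)) (s t : Fin n → K) :
    iotaOn U (s + t) = iotaOn U s + iotaOn U t := by
  simp [iotaOn, add_mul, sum_add_distrib]

lemma iotaOn_smul (U : Finset (Fin n)) (c : K) (u : Fin n → K) :
    iotaOn U (c • u) = C c * iotaOn U u := by
  simp [iotaOn, mul_sum, mul_assoc]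

lemma iotaOn_union_of_eq_zero {U W : Finset (Fin n)} {u : Fin n → K} (hUW : Disjoint U W)
    (hW : ∀ i ∈ W, u i = 0) : iotaOn (U ∪ W) u = (∏ j ∈ W, X j) * iotaOn U u := by
  rw [iotaOn, sum_union hUW, sum_eq_zero (s := W) fun i hi => by simp [hW i hi], add_zero,
    iotaOn, mul_sum]
  refine sum_congr rfl fun i hi => ?_
  rw [erase_union_distrib, erase_eq_of_notMem (disjoint_left.1 hUW hi),
    prod_union (disjoint_of_subset_left (erase_subset i U) hUW)]
  ring

lemma iotaOn_eq_of_lsupp_subset {U : Finset (Fin n)} {u : Fin n → K} (h : lsupp u ⊆ U) :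
    iotaOn U u = (∏ j ∈ U \ lsupp u, X j) * iotaL u := by
  have := iotaOn_union_of_eq_zero (U := lsupp u) (W := U \ lsupp u) disjoint_sdiff
    fun i hi => notMem_lsupp.1 (mem_sdiff.1 hi).2
  rwa [union_sdiff_of_subset h] at this

lemma iotaOn_insert {U : Finset (Fin n)} {k : Fin n} (hk : k ∉ U) (u : Fin n → K) :
    iotaOn (insert k U) u = C (u k) * ∏ j ∈ U, X j + X k * iotaOn U u := by
  rw [iotaOn, sum_insert hk, erase_insert hk, iotaOn, mul_sum]
  congr 1
  refine sum_congr rfl fun i hi => ?_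
  rw [erase_insert_of_ne (ne_of_mem_of_not_mem hi hk).symm,
    prod_insert fun h => hk (mem_of_mem_erase h)]
  ring

lemma iotaL_eq_of_mem_lsupp {u : Fin n → K} {k : Fin n} (hk : k ∈ lsupp u) :
    iotaL u = C (u k) * ∏ j ∈ (lsupp u).erase k, X j + X k * iotaOn ((lsupp u).erase k) u := by
  conv_lhs => rw [iotaL_eq_iotaOn, ← insert_erase hk]
  exact iotaOn_insert (notMem_erase k _) u

lemma iotaL_smul (c : K) (u : Fin n → K) : iotaL (c • u) = C c * iotaL u := by
  rcases eq_or_ne c 0 with rfl | hc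
  · simp [iotaL, lsupp]
  · rw [iotaL_eq_iotaOn, lsupp_smul hc, iotaOn_smul]
    rfl

lemma C_mul_iotaL_add_of_inter_eq_singleton {s t : Fin n → K} {k : Fin n}
    (hst : lsupp s ∩ lsupp t = {k}) (hk : s k + t k = 0) :
    C (s k) * iotaL (s + t) =
      iotaOn ((lsupp t).erase k) t * iotaL s - iotaOn ((lsupp s).erase k) s * iotaL t := by
  have hkst : k ∈ lsupp s ∩ lsupp t := hst ▸ mem_singleton_self k
  have heq : ∀ {i}, i ∈ lsupp s → i ∈ lsupp t → i = k := fun hs ht =>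
    mem_singleton.1 (hst ▸ mem_inter.2 ⟨hs, ht⟩)
  have ht0 : ∀ i ∈ (lsupp s).erase k, t i = 0 := fun i hi =>
    notMem_lsupp.1 fun ht => (mem_erase.1 hi).1 (heq (mem_of_mem_erase hi) ht)
  have hs0 : ∀ i ∈ (lsupp t).erase k, s i = 0 := fun i hi =>
    notMem_lsupp.1 fun hs => (mem_erase.1 hi).1 (heq hs (mem_of_mem_erase hi))
  have hdisj : Disjoint ((lsupp s).erase k) ((lsupp t).erase k) :=
    disjoint_left.2 fun i hi hi' => mem_lsupp.1 (mem_of_mem_erase hi') (ht0 i hi)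
  have hsupp : lsupp (s + t) = (lsupp s).erase k ∪ (lsupp t).erase k := by
    ext i
    rw [← erase_union_distrib, mem_erase, mem_union, mem_lsupp, mem_lsupp, mem_lsupp,
      Pi.add_apply]
    by_cases hik : i = k
    · simp [hik, hk]
    have : s i = 0 ∨ t i = 0 := by
      contrapose! hik
      exact heq (mem_lsupp.2 hik.1) (mem_lsupp.2 hik.2)
    rcases this with h | h <;> simp [h, hik]
  have hsum : iotaL (s + t) = (∏ j ∈ (lsupp t).erase k, X j) * iotaOn ((lsupp s).erase k) s
      + (∏ j ∈ (lsupp s).erase k, X j) * iotaOn ((lsupp t).erase k) t := by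
    rw [iotaL_eq_iotaOn, hsupp, iotaOn_add, iotaOn_union_of_eq_zero hdisj hs0, union_comm,
      iotaOn_union_of_eq_zero hdisj.symm ht0]
  rw [hsum, iotaL_eq_of_mem_lsupp (mem_inter.1 hkst).1,
    iotaL_eq_of_mem_lsupp (mem_inter.1 hkst).2, eq_neg_of_add_eq_zero_right hk, map_neg]
  ring

theorem iotaL_add_mem_of_card_inter_le_one {I : Ideal (MvPolynomial (Fin n) K)}
    {s t : Fin n → K} (hst : #(lsupp s ∩ lsupp t) ≤ 1) (hs : iotaL s ∈ I) (ht : iotaL t ∈ I) :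
    iotaL (s + t) ∈ I := by
  by_cases hc : ∃ k ∈ lsupp s ∩ lsupp t, s k + t k = 0
  · obtain ⟨k, hk, hsum⟩ := hc
    have hsk : IsUnit (C (s k) : MvPolynomial (Fin n) K) :=
      (isUnit_iff_ne_zero.2 (mem_lsupp.1 (mem_inter.1 hk).1)).map C
    have hsing : lsupp s ∩ lsupp t = {k} :=
      eq_singleton_iff_unique_mem.2 ⟨hk, fun j hj => card_le_one.1 hst j hj k hk⟩
    rw [← Ideal.unit_mul_mem_iff_mem I hsk, C_mul_iotaL_add_of_inter_eq_singleton hsing hsum]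
    exact I.sub_mem (I.mul_mem_left _ hs) (I.mul_mem_left _ ht)
  · push Not at hc
    have hsupp : lsupp (s + t) = lsupp s ∪ lsupp t := by
      ext i
      rw [mem_union, mem_lsupp, mem_lsupp, mem_lsupp, Pi.add_apply]
      by_cases hs : s i = 0
      · simp [hs]
      by_cases ht : t i = 0
      · simp [ht]
      simp [hs, hc i (mem_inter.2 ⟨mem_lsupp.2 hs, mem_lsupp.2 ht⟩)]
    rw [iotaL_eq_iotaOn, hsupp, iotaOn_add, iotaOn_eq_of_lsupp_subset subset_union_left,
      iotaOn_eq_of_lsupp_subset subset_union_right]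
    exact I.add_mem (I.mul_mem_left _ hs) (I.mul_mem_left _ ht)

theorem iotaL_sum_smul_mem_Jid {ι : Type*} [LinearOrder ι] [LocallyFiniteOrderBot ι]
    {R : Set (Fin n → K)} {rr : ι → Fin n → K} (hrr : ∀ i, rr i ∈ R) (a : ι → K)
    (hind : ∀ i, #(lsupp (rr i) ∩ (Iio i).biUnion fun j => lsupp (rr j)) ≤ 1)
    (s : Finset ι) : iotaL (∑ i ∈ s, a i • rr i) ∈ Jid R := by
  induction s using Finset.induction_on_max with
  | empty => simp [iotaL, lsupp]
  | insert i s hlt ih =>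
    rw [sum_insert fun hi => lt_irrefl i (hlt i hi), add_comm]
    have hprev : lsupp (∑ j ∈ s, a j • rr j) ⊆ (Iio i).biUnion fun j => lsupp (rr j) :=
      (lsupp_sum_subset s _).trans <| biUnion_subset.2 fun j hj =>
        (lsupp_smul_subset _ _).trans <|
          subset_biUnion_of_mem (fun j => lsupp (rr j)) (mem_Iio.2 (hlt j hj))
    refine iotaL_add_mem_of_card_inter_le_one ((card_le_card ?_).trans (hind i)) ih ?_
    · rw [inter_comm]
      exact inter_subset_inter (lsupp_smul_subset _ _) hprev
    · rw [iotaL_smul]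
      exact Ideal.mul_mem_left _ _ (Ideal.subset_span ⟨rr i, hrr i, rfl⟩)

theorem iotaL_induced_mem_Jid_general
    (R : Set (Fin n → K))
    (m : ℕ) (rr : Fin m → (Fin n → K)) (hrr : ∀ i, rr i ∈ R) (a : Fin m → K)
    (hind : ∀ i : Fin m,
      (lsupp (rr i) ∩ (Finset.Iio i).biUnion (fun j => lsupp (rr j))).card ≤ 1) :
    iotaL (∑ i, a i • rr i) ∈ Jid R :=
  iotaL_sum_smul_mem_Jid hrr a hind univ

/-- Lemma 4.2: if `r` is induced from `ℜ`, i.e. `r = ∑ᵢ aᵢ rᵢ` with `rᵢ ∈ ℜ` and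
`|supp(rᵢ) ∩ (supp(r₁) ∪ ⋯ ∪ supp(r_{i-1}))| ≤ 1` for each `i ≥ 2`, then `ι(r) ∈ J(ℜ)`. -/
theorem iotaL_induced_mem_Jid
    {V : Type*} [AddCommGroup V] [Module K V] [FiniteDimensional K V]
    (α : Fin n → Module.Dual K V) (hne : ∀ i, α i ≠ 0)
    (hdist : ∀ i j, i ≠ j → LinearMap.ker (α i) ≠ LinearMap.ker (α j))
    (R : Set (Fin n → K)) (hR : ∀ r ∈ R, IsRel α r)
    (m : ℕ) (rr : Fin m → (Fin n → K)) (hrr : ∀ i, rr i ∈ R) (a : Fin m → K)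
    (hind : ∀ i : Fin m,
      (lsupp (rr i) ∩ (Finset.Iio i).biUnion (fun j => lsupp (rr j))).card ≤ 1) :
    iotaL (∑ i, a i • rr i) ∈ Jid R :=
  iotaL_induced_mem_Jid_general R m rr hrr a hind

end
end
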